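/- Let r ≥ 0 and k ≥ r be integers, let n ≥ 0 and f1 ≥ 0 be integers, and let t̃_1, …, t̃_n be integers with t̃_i ≥ 1 for every i. For the indices with t̃_i ≥ 2 set Ω̃_i = Ω(t̃_i,r), ã_i = a(t̃_i,r), b̃_i = b(t̃_i,r), and for the indices with t̃_i = 1 set Ω̃_i = ã_i = b̃_i = 0. Then, as integers, C(k+2,2) + f1·C(k+2−(r+1),2) − Σ_{i=1}^{n} [ t̃_i·C(k+2−(r+1),2) − b̃_i·C(k+2−Ω̃_i,2) − ã_i·C(k+2−(Ω̃_i+1),2) ] = C(k+2,2) + f1·C(k+2−(r+1),2) − n·[ C(k+2,2) − C(r+2,2) ] + Σ_{i=1}^{n} Σ_{j=1}^{k−r} max(r + j + 1 − j·t̃_i, 0). (Equivalently: the homological upper bound formula for dim C_k^r(Δ) coincides with Schumaker's upper bound formula, for any combinatorial data f1 and t̃_1,…,t̃_n with each t̃_i ≥ 1.) -/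

import Mathlib

/-- `Ω t r = ⌊t·r/(t-1)⌋ + 1`, the floor taken in `ℚ`. -/
noncomputable def Omega (t r : ℤ) : ℤ := ⌊(t * r : ℚ) / ((t : ℚ) - 1)⌋ + 1

/-- `a t r = t·(r+1) + (1−t)·Ω(t,r)`. -/
noncomputable def aa (t r : ℤ) : ℤ := t * (r + 1) + (1 - t) * Omega t r

/-- `b t r = t − 1 − a(t,r)`. -/
noncomputable def bb (t r : ℤ) : ℤ := t - 1 - aa t r

/-- `C2 m = C(m, 2)`, with the convention that it is `0` for `m < 2`
(truncation via `Int.toNat`). -/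
def C2 (m : ℤ) : ℤ := ((m.toNat).choose 2 : ℤ)

/-! Write `d = k - r` and, for `t ≥ 2`, `r = (t-1)q + s` with `0 ≤ s < t-1`, so that
`Ω = r + q + 1`, `a = s + 1` and `b = t - 2 - s`. Each binomial coefficient of the homological
formula is a sum over `j = 1, …, d` (`C(d+1, 2) = ∑ j`, `C(d-q+1, 2) = ∑ max(j-q, 0)`, …), and the
identity holds summand by summand:
`max(r+1 - j(t-1), 0) = r+1 - j(t-1) + b·max(j-q, 0) + a·max(j-q-1, 0)`,
checked separately for `j ≤ q` and `j > q`. For `t = 1` the summands reduce to `r + 1`. -/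

lemma C2_add_one (m : ℤ) : C2 (m + 1) = C2 m + max m 0 := by
  rw [← Int.toNat_eq_max]
  unfold C2
  rcases le_or_gt 0 m with h | h
  · rw [show (m + 1).toNat = m.toNat + 1 by omega, Nat.choose_succ_succ' m.toNat 1]
    push_cast [Nat.choose_one_right]
    ring
  · have h1 : (m + 1).toNat = 0 ∨ (m + 1).toNat = 1 := by omega
    rcases h1 with h1 | h1 <;> simp [h1, show m.toNat = 0 by omega]

lemma C2_eq_zero_of_le_one {m : ℤ} (h : m ≤ 1) : C2 m = 0 := by
  simp [C2, Nat.choose_eq_zero_of_lt (show m.toNat < 2 by omega)]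

lemma sum_Icc_one_max_add_eq_C2_sub (m : ℤ) {d : ℤ} (hd : 0 ≤ d) :
    ∑ j ∈ Finset.Icc 1 d, max (j + m) 0 = C2 (d + m + 1) - C2 (m + 1) := by
  induction d, hd using Int.leInduction with
  | base => simp
  | succ d hd ih =>
    rw [← Finset.insert_Icc_right_eq_Icc_add_one (by omega), Finset.sum_insert (by simp), ih,
      show d + 1 + m + 1 = d + m + 1 + 1 by ring, C2_add_one (d + m + 1)]
    ring_nf

lemma Omega_eq (r : ℤ) {t : ℤ} (ht : 2 ≤ t) : Omega t r = r + r / (t - 1) + 1 := by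
  obtain ⟨u, hu⟩ : ∃ u : ℕ, t - 1 = u := Int.eq_ofNat_of_zero_le (by omega)
  have htu : (t : ℚ) - 1 = u := by exact_mod_cast hu
  rw [Omega, htu, hu, show (t * r : ℚ) = ((r + r * u : ℤ) : ℚ) by push_cast [← htu]; ring,
    Rat.floor_intCast_div_natCast, Int.add_mul_ediv_right _ _ (by omega)]
  ring

lemma aa_eq (r : ℤ) {t : ℤ} (ht : 2 ≤ t) : aa t r = r % (t - 1) + 1 := by
  rw [aa, Omega_eq r ht]
  linear_combination -Int.mul_ediv_add_emod r (t - 1)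

lemma bb_eq (r : ℤ) {t : ℤ} (ht : 2 ≤ t) : bb t r = t - 2 - r % (t - 1) := by
  rw [bb, aa_eq r ht]
  ring

lemma max_add_one_sub_mul_eq {r t q s : ℤ} (hr : r = (t - 1) * q + s) (hs : 0 ≤ s)
    (hst : s < t - 1) (j : ℤ) :
    max (r + 1 - j * (t - 1)) 0
      = r + 1 - j * (t - 1) + (t - 2 - s) * max (j - q) 0 + (s + 1) * max (j - q - 1) 0 := by
  obtain ⟨e, rfl⟩ : ∃ e, j = q + e := ⟨j - q, by ring⟩
  have hval : r + 1 - (q + e) * (t - 1) = s + 1 - e * (t - 1) := by rw [hr]; ring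
  rw [hval, show q + e - q = e by ring]
  rcases le_or_gt e 0 with he | he
  · rw [max_eq_left (by nlinarith), max_eq_right he, max_eq_right (by omega)]
    ring
  · rw [max_eq_right (by nlinarith), max_eq_left he.le, max_eq_left (by omega)]
    ring

lemma C2_combination_eq_sub_sum_max {r t q A B : ℤ} (hr : 0 ≤ r) (hq : 0 ≤ q)
    (hpt : ∀ j, max (r + 1 - j * (t - 1)) 0
      = r + 1 - j * (t - 1) + B * max (j - q) 0 + A * max (j - q - 1) 0)
    {d : ℤ} (hd : 0 ≤ d) :
    t * C2 (d + 1) - B * C2 (d - q + 1) - A * C2 (d - q)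
      = C2 (d + r + 2) - C2 (r + 2) - ∑ j ∈ Finset.Icc 1 d, max (r + j + 1 - j * t) 0 := by
  have h0 := sum_Icc_one_max_add_eq_C2_sub 0 hd
  have hB := sum_Icc_one_max_add_eq_C2_sub (-q) hd
  have hA := sum_Icc_one_max_add_eq_C2_sub (-q - 1) hd
  have hR := sum_Icc_one_max_add_eq_C2_sub (r + 1) hd
  rw [C2_eq_zero_of_le_one (by omega : (0 : ℤ) + 1 ≤ 1)] at h0
  rw [C2_eq_zero_of_le_one (by omega : -q + 1 ≤ 1)] at hB
  rw [C2_eq_zero_of_le_one (by omega : -q - 1 + 1 ≤ 1)] at hA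
  calc t * C2 (d + 1) - B * C2 (d - q + 1) - A * C2 (d - q)
      = ∑ j ∈ Finset.Icc 1 d,
          (t * max (j + 0) 0 - B * max (j + -q) 0 - A * max (j + (-q - 1)) 0) := by
        rw [Finset.sum_sub_distrib, Finset.sum_sub_distrib, ← Finset.mul_sum, ← Finset.mul_sum,
          ← Finset.mul_sum, h0, hB, hA]
        ring_nf
    _ = ∑ j ∈ Finset.Icc 1 d, (max (j + (r + 1)) 0 - max (r + j + 1 - j * t) 0) := by
        refine Finset.sum_congr rfl fun j hj => ?_
        have hj1 : 1 ≤ j := (Finset.mem_Icc.mp hj).1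
        rw [max_eq_left (by omega : 0 ≤ j + 0), max_eq_left (by omega : 0 ≤ j + (r + 1)),
          show r + j + 1 - j * t = r + 1 - j * (t - 1) by ring, hpt j]
        ring_nf
    _ = C2 (d + r + 2) - C2 (r + 2) - ∑ j ∈ Finset.Icc 1 d, max (r + j + 1 - j * t) 0 := by
        rw [Finset.sum_sub_distrib, hR, show d + (r + 1) + 1 = d + r + 2 by ring,
          show r + 1 + 1 = r + 2 by ring]

lemma homological_term_eq_schumaker_term {r k t : ℤ} (hr : 0 ≤ r) (hk : r ≤ k) (ht : 1 ≤ t) :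
    t * C2 (k + 2 - (r + 1))
        - (if t = 1 then 0 else bb t r) * C2 (k + 2 - (if t = 1 then 0 else Omega t r))
        - (if t = 1 then 0 else aa t r) * C2 (k + 2 - ((if t = 1 then 0 else Omega t r) + 1))
      = C2 (k + 2) - C2 (r + 2)
        - ∑ j ∈ Finset.Icc (1 : ℤ) (k - r), max (r + j + 1 - j * t) 0 := by
  obtain ⟨d, hd, rfl⟩ : ∃ d, 0 ≤ d ∧ k = d + r := ⟨k - r, by omega, by ring⟩
  rw [show d + r + 2 - (r + 1) = d + 1 by ring, show d + r - r = d by ring]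
  rcases ht.eq_or_lt with rfl | ht
  · simpa using C2_combination_eq_sub_sum_max (t := 1) (A := 0) (B := 0) hr le_rfl
      (fun j => by simp [show (0 : ℤ) ≤ r + 1 by omega]) hd
  · have ht2 : 2 ≤ t := ht
    rw [if_neg ht.ne', if_neg ht.ne', if_neg ht.ne', Omega_eq r ht2, aa_eq r ht2, bb_eq r ht2,
      show d + r + 2 - (r + r / (t - 1) + 1) = d - r / (t - 1) + 1 by ring,
      show d + r + 2 - (r + r / (t - 1) + 1 + 1) = d - r / (t - 1) by ring]
    exact C2_combination_eq_sub_sum_max hr (Int.ediv_nonneg hr (by omega))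
      (max_add_one_sub_mul_eq (Int.mul_ediv_add_emod r (t - 1)).symm
        (Int.emod_nonneg r (by omega)) (Int.emod_lt_of_pos r (by omega))) hd

theorem stmt_10_general (r k : ℤ) (hr : 0 ≤ r) (hk : k ≥ r) (n : ℕ) (f1 : ℤ)
    (t : Fin n → ℤ) (ht : ∀ i, 1 ≤ t i)
    (Ω A B : Fin n → ℤ)
    (hΩ : ∀ i, Ω i = if t i = 1 then 0 else Omega (t i) r)
    (hA : ∀ i, A i = if t i = 1 then 0 else aa (t i) r)
    (hB : ∀ i, B i = if t i = 1 then 0 else bb (t i) r) :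
    C2 (k + 2) + f1 * C2 (k + 2 - (r + 1))
      - ∑ i : Fin n, (t i * C2 (k + 2 - (r + 1))
          - B i * C2 (k + 2 - Ω i)
          - A i * C2 (k + 2 - (Ω i + 1)))
    = C2 (k + 2) + f1 * C2 (k + 2 - (r + 1))
      - n * (C2 (k + 2) - C2 (r + 2))
      + ∑ i : Fin n, ∑ j ∈ Finset.Icc (1 : ℤ) (k - r), max (r + j + 1 - j * t i) 0 := by
  have hterm : ∀ i, t i * C2 (k + 2 - (r + 1)) - B i * C2 (k + 2 - Ω i)
      - A i * C2 (k + 2 - (Ω i + 1))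
        = C2 (k + 2) - C2 (r + 2)
          - ∑ j ∈ Finset.Icc (1 : ℤ) (k - r), max (r + j + 1 - j * t i) 0 := fun i => by
    rw [hΩ i, hA i, hB i]
    exact homological_term_eq_schumaker_term hr hk (ht i)
  simp only [hterm, Finset.sum_sub_distrib, Finset.sum_const, Finset.card_univ,
    Fintype.card_fin, nsmul_eq_mul]
  ring

theorem stmt_10 (r k : ℤ) (hr : 0 ≤ r) (hk : k ≥ r) (n : ℕ) (f1 : ℤ) (hf1 : 0 ≤ f1)
    (t : Fin n → ℤ) (ht : ∀ i, 1 ≤ t i)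
    (Ω A B : Fin n → ℤ)
    (hΩ : ∀ i, Ω i = if t i = 1 then 0 else Omega (t i) r)
    (hA : ∀ i, A i = if t i = 1 then 0 else aa (t i) r)
    (hB : ∀ i, B i = if t i = 1 then 0 else bb (t i) r) :
    C2 (k + 2) + f1 * C2 (k + 2 - (r + 1))
      - ∑ i : Fin n, (t i * C2 (k + 2 - (r + 1))
          - B i * C2 (k + 2 - Ω i)
          - A i * C2 (k + 2 - (Ω i + 1)))
    = C2 (k + 2) + f1 * C2 (k + 2 - (r + 1))
      - n * (C2 (k + 2) - C2 (r + 2))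
      + ∑ i : Fin n, ∑ j ∈ Finset.Icc (1 : ℤ) (k - r), max (r + j + 1 - j * t i) 0 :=
  stmt_10_general r k hr hk n f1 t ht Ω A B hΩ hA hB
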